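/- arXiv:2106.12429 — 2 statements merged into one kernel-verified Lean document; each statement's English description precedes it below -/
import Mathlib

section
/- For every real number η⁻, the integral ∫_{-∞}^{∞} x · (1/√(2π)) · exp(−x²/2) · ( η⁻ + 2(1 − η⁻) · ∫_{-∞}^{x} (1/√(2π)) · exp(−y²/2) dy ) dx equals (1 − η⁻)/√π. (In the paper's terminology: the standardized selection pressure of linear ranking selection with worst-selection parameter η⁻, applied to a standard Gaussian fitness distribution, equals S_R(η⁻) = (1 − η⁻)·(1/√π).) -/
/-!
Write `φ` for the standard Gaussian density and `Φ` for its distribution function. Since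
`φ' = -x φ`, integration by parts gives Stein's identity `∫ x φ(x) g(x) dx = ∫ g'(x) φ(x) dx` for
bounded differentiable `g`. For `g = η + 2(1 - η)Φ` this leaves `2(1 - η) ∫ φ² = 2(1 - η) / (2√π)`.
-/

open Real MeasureTheory Set ProbabilityTheory

lemma gaussianPDFReal_zero_one_apply (x : ℝ) :
    gaussianPDFReal 0 1 x = 1 / √(2 * π) * exp (-x ^ 2 / 2) := by
  simp [gaussianPDFReal]

lemma hasDerivAt_gaussianPDFReal (μ : ℝ) (v : NNReal) (x : ℝ) :
    HasDerivAt (gaussianPDFReal μ v) (-((x - μ) / v) * gaussianPDFReal μ v x) x := by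
  have hexponent : HasDerivAt (fun y => -(y - μ) ^ 2 / (2 * v)) (-((x - μ) / v)) x := by
    refine ((((hasDerivAt_id' x).sub_const μ).fun_pow 2).fun_neg.div_const
      (2 * (v : ℝ))).congr_deriv ?_
    rcases eq_or_ne (v : ℝ) 0 with hv | hv
    · simp [hv]
    · field_simp
      ring
  rw [gaussianPDFReal_def]
  exact (hexponent.exp.const_mul _).congr_deriv (by ring)

lemma integrable_mul_gaussianPDFReal_zero_one :
    Integrable fun x => x * gaussianPDFReal 0 1 x := by
  refine ((integrable_mul_exp_neg_mul_sq (b := 1 / 2) (by norm_num)).const_mul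
    (1 / √(2 * π))).congr (ae_of_all _ fun x => ?_)
  simp only [gaussianPDFReal_zero_one_apply]
  ring_nf

lemma gaussianPDFReal_zero_one_mul_self (x : ℝ) :
    gaussianPDFReal 0 1 x * gaussianPDFReal 0 1 x = (2 * π)⁻¹ * exp (-1 * x ^ 2) := by
  simp only [gaussianPDFReal_zero_one_apply]
  rw [mul_mul_mul_comm, ← exp_add, ← sq, div_pow, sq_sqrt (by positivity)]
  ring_nf

lemma integrable_gaussianPDFReal_zero_one_mul_self :
    Integrable fun x => gaussianPDFReal 0 1 x * gaussianPDFReal 0 1 x := by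
  simp_rw [gaussianPDFReal_zero_one_mul_self]
  exact (integrable_exp_neg_mul_sq one_pos).const_mul _

lemma integral_gaussianPDFReal_zero_one_mul_self :
    ∫ x, gaussianPDFReal 0 1 x * gaussianPDFReal 0 1 x = 1 / (2 * √π) := by
  simp_rw [gaussianPDFReal_zero_one_mul_self, integral_const_mul, integral_gaussian, div_one]
  have hπ : √π ≠ 0 := by positivity
  field_simp
  rw [sq_sqrt pi_pos.le]

lemma abs_setIntegral_gaussianPDFReal_le_one (μ : ℝ) {v : NNReal} (hv : v ≠ 0) (s : Set ℝ) :
    |∫ y in s, gaussianPDFReal μ v y| ≤ 1 := by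
  rw [abs_of_nonneg (setIntegral_nonneg_of_ae (ae_of_all _ (gaussianPDFReal_nonneg μ v))),
    ← integral_gaussianPDFReal_eq_one μ hv]
  exact setIntegral_le_integral (integrable_gaussianPDFReal μ v)
    (ae_of_all _ (gaussianPDFReal_nonneg μ v))

lemma hasDerivAt_integral_Iic {E : Type*} [NormedAddCommGroup E] [NormedSpace ℝ E]
    [CompleteSpace E] {f : ℝ → E} (hf : Integrable f) {x : ℝ} (hfx : ContinuousAt f x) :
    HasDerivAt (fun u => ∫ y in Iic u, f y) (f x) x := by
  have hsplit : (fun u => ∫ y in Iic u, f y)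
      = fun u => (∫ y in Iic 0, f y) + ∫ y in (0)..u, f y := by
    ext u
    rw [← intervalIntegral.integral_Iic_sub_Iic hf.integrableOn hf.integrableOn, add_sub_cancel]
  rw [hsplit]
  exact (intervalIntegral.integral_hasDerivAt_right hf.intervalIntegrable
    hf.aestronglyMeasurable.stronglyMeasurableAtFilter hfx).const_add _

theorem integral_mul_gaussianPDFReal_mul_eq_integral_deriv_mul {g g' : ℝ → ℝ} {C : ℝ}
    (hg : ∀ x, HasDerivAt g (g' x) x) (hgC : ∀ x, ‖g x‖ ≤ C)
    (hg' : Integrable fun x => g' x * gaussianPDFReal 0 1 x) :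
    ∫ x, x * gaussianPDFReal 0 1 x * g x = ∫ x, g' x * gaussianPDFReal 0 1 x := by
  have hφ (x : ℝ) : HasDerivAt (gaussianPDFReal 0 1) (-(x * gaussianPDFReal 0 1 x)) x := by
    simpa using hasDerivAt_gaussianPDFReal 0 1 x
  have hgm : AEStronglyMeasurable g :=
    (continuous_iff_continuousAt.2 fun x => (hg x).continuousAt).aestronglyMeasurable
  have hparts := integral_mul_deriv_eq_deriv_mul_of_integrable (fun x _ => hg x)
    (fun x _ => hφ x) (integrable_mul_gaussianPDFReal_zero_one.neg.bdd_mul hgm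
      (ae_of_all _ hgC)) hg'
    ((integrable_gaussianPDFReal 0 1).bdd_mul hgm (ae_of_all _ hgC))
  simp_rw [mul_neg, integral_neg, neg_inj] at hparts
  rw [← hparts]
  congr 1 with x
  ring

theorem standardized_selection_pressure_linear_ranking (η : ℝ) :
    (∫ x : ℝ, x * ((1 / Real.sqrt (2 * Real.pi)) * Real.exp (-x ^ 2 / 2)) *
        (η + 2 * (1 - η) *
          ∫ y in Set.Iic x, (1 / Real.sqrt (2 * Real.pi)) * Real.exp (-y ^ 2 / 2)))
      = (1 - η) / Real.sqrt Real.pi := by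
  simp_rw [← gaussianPDFReal_zero_one_apply]
  have hΦ (x : ℝ) : HasDerivAt (fun u => ∫ y in Iic u, gaussianPDFReal 0 1 y)
      (gaussianPDFReal 0 1 x) x :=
    hasDerivAt_integral_Iic (integrable_gaussianPDFReal 0 1)
      (hasDerivAt_gaussianPDFReal 0 1 x).continuousAt
  have hbound (x : ℝ) :
      ‖η + 2 * (1 - η) * ∫ y in Iic x, gaussianPDFReal 0 1 y‖ ≤ |η| + |2 * (1 - η)| := by
    grw [norm_add_le, Real.norm_eq_abs, Real.norm_eq_abs, abs_mul,
      abs_setIntegral_gaussianPDFReal_le_one 0 one_ne_zero, mul_one]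
  rw [integral_mul_gaussianPDFReal_mul_eq_integral_deriv_mul
    (fun x => ((hΦ x).const_mul (2 * (1 - η))).const_add η) hbound]
  · simp_rw [mul_assoc (2 * (1 - η))]
    rw [integral_const_mul, integral_gaussianPDFReal_zero_one_mul_self]
    field_simp
  · simp_rw [mul_assoc (2 * (1 - η))]
    exact integrable_gaussianPDFReal_zero_one_mul_self.const_mul _
end

section
/- The integral over the real line ∫_{-∞}^{∞} x · exp(−x²/2) · ( ∫_{-∞}^{x} exp(−y²/2) dy )² dx equals √2 · π. -/
/-!
Write φ(x) = exp(-x²/2) and Φ(x) = ∫_{-∞}^x φ. Since xφ = -φ', integrating by parts turns the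
integral into 2 ∫ Φ φ². As φ is even, Φ(x) + Φ(-x) = ∫ φ = √(2π), so averaging ∫ Φ φ² with its
reflection under x ↦ -x gives 2 ∫ Φ φ² = √(2π) · ∫ φ² = √(2π) · √π.
-/

open Real MeasureTheory Set

section CumulativeIntegral

variable {g : ℝ → ℝ}

lemma norm_integral_Iic_le_integral_norm (hg : Integrable g) (x : ℝ) :
    ‖∫ y in Iic x, g y‖ ≤ ∫ y, ‖g y‖ :=
  (norm_integral_le_integral_norm _).trans
    (setIntegral_le_integral hg.norm (.of_forall fun _ => norm_nonneg _))

lemma integral_Iic_eq_add_intervalIntegral (hg : Integrable g) (x : ℝ) :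
    ∫ y in Iic x, g y = (∫ y in Iic 0, g y) + ∫ y in 0..x, g y := by
  rw [← intervalIntegral.integral_Iic_sub_Iic hg.integrableOn hg.integrableOn, add_sub_cancel]

lemma continuous_integral_Iic (hg : Integrable g) : Continuous fun x => ∫ y in Iic x, g y := by
  rw [funext (integral_Iic_eq_add_intervalIntegral hg)]
  exact continuous_const.add
    (intervalIntegral.continuous_primitive (fun _ _ => hg.intervalIntegrable) 0)

lemma hasDerivAt_integral_Iic_s2 (hg : Integrable g) (hc : Continuous g) (x : ℝ) :
    HasDerivAt (fun t => ∫ y in Iic t, g y) (g x) x := by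
  rw [funext (integral_Iic_eq_add_intervalIntegral hg)]
  exact (intervalIntegral.integral_hasDerivAt_right hg.intervalIntegrable
    (hc.stronglyMeasurableAtFilter _ _) hc.continuousAt).const_add _

lemma integrable_integral_Iic_pow_mul (hg : Integrable g) {h : ℝ → ℝ} (hh : Integrable h)
    (n : ℕ) : Integrable fun x => (∫ y in Iic x, g y) ^ n * h x :=
  hh.bdd_mul ((continuous_integral_Iic hg).pow n).aestronglyMeasurable
    (.of_forall fun x => by
      rw [norm_pow]
      exact pow_le_pow_left₀ (norm_nonneg _) (norm_integral_Iic_le_integral_norm hg x) n)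

lemma integral_Iic_add_integral_Iic_neg_of_even (hg : Integrable g)
    (heven : ∀ x, g (-x) = g x) (x : ℝ) :
    (∫ y in Iic x, g y) + ∫ y in Iic (-x), g y = ∫ y, g y := by
  have hreflect : ∫ y in Iic (-x), g y = ∫ y in Ioi x, g y := by
    simpa [heven] using integral_comp_neg_Iic (-x) g
  rw [hreflect, intervalIntegral.integral_Iic_add_Ioi hg.integrableOn hg.integrableOn]

theorem integral_integral_Iic_mul_of_even (hg : Integrable g) (hg_even : ∀ x, g (-x) = g x)
    {h : ℝ → ℝ} (hh : Integrable h) (hh_even : ∀ x, h (-x) = h x) :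
    ∫ x, (∫ y in Iic x, g y) * h x = (∫ x, g x) * (∫ x, h x) / 2 := by
  have hint : Integrable fun x => (∫ y in Iic x, g y) * h x := by
    simpa using integrable_integral_Iic_pow_mul hg hh 1
  have hint_neg : Integrable fun x => (∫ y in Iic (-x), g y) * h x := by
    simpa [hh_even] using hint.comp_neg
  have hreflect : ∫ x, (∫ y in Iic (-x), g y) * h x = ∫ x, (∫ y in Iic x, g y) * h x := by
    simpa [hh_even] using integral_neg_eq_self (fun x => (∫ y in Iic x, g y) * h x) volume
  have hsum : ∫ x, ((∫ y in Iic x, g y) + ∫ y in Iic (-x), g y) * h x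
      = (∫ x, g x) * (∫ x, h x) := by
    simp_rw [integral_Iic_add_integral_Iic_neg_of_even hg hg_even, integral_const_mul]
  simp_rw [add_mul] at hsum
  rw [integral_add hint hint_neg, hreflect] at hsum
  linarith

theorem integral_sq_integral_Iic_mul_deriv {g' : ℝ → ℝ} (hderiv : ∀ x, HasDerivAt g (g' x) x)
    (hg : Integrable g) (hg' : Integrable g') (hgg : Integrable fun x => g x ^ 2) :
    ∫ x, (∫ y in Iic x, g y) ^ 2 * g' x = -2 * ∫ x, (∫ y in Iic x, g y) * g x ^ 2 := by
  have hc : Continuous g := continuous_iff_continuousAt.2 fun x => (hderiv x).continuousAt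
  have hsq_deriv (x : ℝ) : HasDerivAt (fun t => (∫ y in Iic t, g y) ^ 2)
      (2 * (∫ y in Iic x, g y) * g x) x := by
    simpa using (hasDerivAt_integral_Iic_s2 hg hc x).fun_pow 2
  rw [integral_mul_deriv_eq_deriv_mul_of_integrable (fun x _ => hsq_deriv x) (fun x _ => hderiv x)
    (integrable_integral_Iic_pow_mul hg hg' 2) _ (integrable_integral_Iic_pow_mul hg hg 2),
    ← integral_const_mul, ← integral_neg]
  · congr 1 with x
    ring
  · convert (integrable_integral_Iic_pow_mul hg hgg 1).const_mul 2 using 1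
    ext x
    simp only [Pi.mul_apply]
    ring

end CumulativeIntegral

lemma hasDerivAt_exp_neg_sq_div_two (x : ℝ) :
    HasDerivAt (fun t => exp (-t ^ 2 / 2)) (-(x * exp (-x ^ 2 / 2))) x := by
  convert ((hasDerivAt_pow 2 x).fun_neg.div_const 2).exp using 1
  push_cast
  ring

lemma exp_neg_sq_div_two_eq (x : ℝ) : exp (-x ^ 2 / 2) = exp (-(1 / 2) * x ^ 2) := by
  ring_nf

lemma exp_neg_sq_div_two_sq (x : ℝ) : exp (-x ^ 2 / 2) ^ 2 = exp (-1 * x ^ 2) := by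
  rw [← exp_nat_mul]
  ring_nf

lemma integrable_exp_neg_sq_div_two : Integrable fun x : ℝ => exp (-x ^ 2 / 2) := by
  simpa only [exp_neg_sq_div_two_eq] using integrable_exp_neg_mul_sq (b := 1 / 2) (by norm_num)

lemma integrable_mul_exp_neg_sq_div_two : Integrable fun x : ℝ => x * exp (-x ^ 2 / 2) := by
  simpa only [exp_neg_sq_div_two_eq] using integrable_mul_exp_neg_mul_sq (b := 1 / 2) (by norm_num)

lemma integrable_exp_neg_sq_div_two_sq : Integrable fun x : ℝ => exp (-x ^ 2 / 2) ^ 2 := by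
  simpa only [exp_neg_sq_div_two_sq] using integrable_exp_neg_mul_sq (b := 1) (by norm_num)

lemma integral_exp_neg_sq_div_two : ∫ x : ℝ, exp (-x ^ 2 / 2) = √(2 * π) := by
  simp only [exp_neg_sq_div_two_eq, integral_gaussian]
  ring_nf

lemma integral_exp_neg_sq_div_two_sq : ∫ x : ℝ, exp (-x ^ 2 / 2) ^ 2 = √π := by
  simp only [exp_neg_sq_div_two_sq, integral_gaussian, div_one]

theorem gaussian_cdf_squared_integral_identity :
    (∫ x : ℝ, x * Real.exp (-x ^ 2 / 2) *
        (∫ y in Set.Iic x, Real.exp (-y ^ 2 / 2)) ^ 2)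
      = Real.sqrt 2 * Real.pi := by
  have heven (x : ℝ) : exp (-(-x) ^ 2 / 2) = exp (-x ^ 2 / 2) := by rw [neg_sq]
  calc (∫ x : ℝ, x * exp (-x ^ 2 / 2) * (∫ y in Iic x, exp (-y ^ 2 / 2)) ^ 2)
      = -∫ x : ℝ, (∫ y in Iic x, exp (-y ^ 2 / 2)) ^ 2 * -(x * exp (-x ^ 2 / 2)) := by
        rw [← integral_neg]
        congr 1 with x
        ring
    _ = 2 * ∫ x : ℝ, (∫ y in Iic x, exp (-y ^ 2 / 2)) * exp (-x ^ 2 / 2) ^ 2 := by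
        rw [integral_sq_integral_Iic_mul_deriv hasDerivAt_exp_neg_sq_div_two
          integrable_exp_neg_sq_div_two integrable_mul_exp_neg_sq_div_two.neg
          integrable_exp_neg_sq_div_two_sq]
        ring
    _ = (∫ x : ℝ, exp (-x ^ 2 / 2)) * ∫ x : ℝ, exp (-x ^ 2 / 2) ^ 2 := by
        rw [integral_integral_Iic_mul_of_even integrable_exp_neg_sq_div_two heven
          integrable_exp_neg_sq_div_two_sq (fun x => by rw [heven])]
        ring
    _ = √2 * π := by
        rw [integral_exp_neg_sq_div_two, integral_exp_neg_sq_div_two_sq, sqrt_mul zero_le_two,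
          mul_assoc, mul_self_sqrt pi_pos.le]
end
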